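/- arXiv:2111.05177 — 2 statements merged into one kernel-verified Lean document; each statement's English description precedes it below -/
import Mathlib

section
/- Let A, F_h, F_θ be real matrices (F_h square of size n, A and F_θ of size m×n), and let v ∈ ℝⁿ be nonzero. Let σ_max and σ_min > 0 be the largest and smallest singular values of F_θ, so that F_θ has full column rank and F_θᵀF_θ ⪰ σ_min² I. Suppose I − F_h is invertible and ‖A(I − F_h) − F_θ‖ < σ_min²/σ_max in operator norm. Let u = (I − F_h)⁻¹ v (so u ≠ 0) and E = A(I − F_h) − F_θ. Then uᵀ (F_θ + E)ᵀ F_θ u > 0, i.e., vᵀ Aᵀ F_θ (I − F_h)⁻¹ v > 0, so the phantom gradient A v and the exact gradient F_θ (I − F_h)⁻¹ v have positive inner product. -/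
open scoped RealInnerProductSpace

/-- Theorem 1 (ascent direction): if `‖A ∘ (I − Fₕ) − F_θ‖ < σ_min²/σ_max`, then the
phantom gradient `A v` and the exact gradient `F_θ (I − Fₕ)⁻¹ v` have positive inner
product. Here `u = (I − Fₕ)⁻¹ v`, encoded by `(1 - Fh) u = v` with `I - Fh` bijective. -/
theorem stmt_0 {n m : ℕ}
    (Fh : EuclideanSpace ℝ (Fin n) →L[ℝ] EuclideanSpace ℝ (Fin n))
    (A Fθ : EuclideanSpace ℝ (Fin n) →L[ℝ] EuclideanSpace ℝ (Fin m))
    (σmin σmax : ℝ) (hσmin : 0 < σmin)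
    (hmax : ‖Fθ‖ = σmax)
    (hmin : ∀ x : EuclideanSpace ℝ (Fin n), σmin * ‖x‖ ≤ ‖Fθ x‖)
    (hbij : Function.Bijective ⇑(1 - Fh))
    (v u : EuclideanSpace ℝ (Fin n)) (hv : v ≠ 0)
    (hu : (1 - Fh) u = v)
    (hE : ‖A.comp (1 - Fh) - Fθ‖ < σmin ^ 2 / σmax) :
    0 < ⟪A v, Fθ u⟫ := by
  set E := A.comp (1 - Fh) - Fθ with hEdef
  have hune : u ≠ 0 := by
    intro h; apply hv; rw [← hu, h, map_zero]
  have hupos : 0 < ‖u‖ := norm_pos_iff.mpr hune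
  have hσmax : 0 < σmax := by
    have h1 := hmin u
    have h2 : ‖Fθ u‖ ≤ σmax * ‖u‖ := hmax ▸ Fθ.le_opNorm u
    nlinarith
  have hAv : A v = Fθ u + E u := by
    simp [hEdef, ← hu]
  have hEu : ‖E u‖ ≤ ‖E‖ * ‖u‖ := E.le_opNorm u
  have hcs : |⟪E u, Fθ u⟫| ≤ ‖E‖ * σmax * ‖u‖ ^ 2 := by
    calc |⟪E u, Fθ u⟫| ≤ ‖E u‖ * ‖Fθ u‖ := abs_real_inner_le_norm _ _
      _ ≤ (‖E‖ * ‖u‖) * (σmax * ‖u‖) := by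
          apply mul_le_mul hEu (hmax ▸ Fθ.le_opNorm u) (norm_nonneg _)
          positivity
      _ = ‖E‖ * σmax * ‖u‖ ^ 2 := by ring
  have hlow : σmin ^ 2 * ‖u‖ ^ 2 ≤ ‖Fθ u‖ ^ 2 := by
    have h := pow_le_pow_left₀ (by positivity) (hmin u) 2
    calc σmin ^ 2 * ‖u‖ ^ 2 = (σmin * ‖u‖) ^ 2 := by ring
      _ ≤ ‖Fθ u‖ ^ 2 := h
  have hEsmall : ‖E‖ * σmax < σmin ^ 2 := by
    rw [← lt_div_iff₀ hσmax]; exact hE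
  have hinner : ⟪A v, Fθ u⟫ = ‖Fθ u‖ ^ 2 + ⟪E u, Fθ u⟫ := by
    rw [hAv, inner_add_left, real_inner_self_eq_norm_sq]
  rw [hinner]
  obtain ⟨h1, -⟩ := abs_le.mp hcs
  have hpos : 0 < (σmin ^ 2 - ‖E‖ * σmax) * ‖u‖ ^ 2 :=
    mul_pos (sub_pos.mpr hEsmall) (pow_pos hupos 2)
  nlinarith [hlow]
end

section
/- Let (U_t)_{t≥0} be a sequence of m×n real matrices converging to U_∞ with ‖U_t‖ ≤ M for all t (including t = ∞), and let (V_t)_{t≥0} be a sequence of n×n real matrices converging to V_∞ with ‖V_t‖ ≤ γ and ‖V_∞‖ ≤ γ for some γ ∈ (0,1). Then lim_{T→∞} Σ_{t=0}^{T−1} U_t · (V_{t+1} V_{t+2} ⋯ V_{T−1}) = U_∞ (I − V_∞)⁻¹, where convergence is in operator norm and the empty product is the identity. -/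
open Finset Filter

/-- Ordered product `V a * V (a+1) * ⋯ * V (b-1)` (identity if `b ≤ a`). -/
noncomputable def prodIco {n : ℕ} (V : ℕ → (EuclideanSpace ℝ (Fin n) →L[ℝ] EuclideanSpace ℝ (Fin n)))
    (a b : ℕ) : EuclideanSpace ℝ (Fin n) →L[ℝ] EuclideanSpace ℝ (Fin n) :=
  ((List.range' a (b - a)).map V).prod

section Aux

variable {n : ℕ} (V : ℕ → (EuclideanSpace ℝ (Fin n) →L[ℝ] EuclideanSpace ℝ (Fin n)))

lemma aux_norm_prod {γ : ℝ} (hγ0 : 0 ≤ γ) (hVbound : ∀ t, ‖V t‖ ≤ γ) :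
    ∀ (k a : ℕ), ‖((List.range' a k).map V).prod‖ ≤ γ ^ k := by
  intro k
  induction k with
  | zero =>
    intro a
    simp only [List.range', List.map_nil, List.prod_nil, pow_zero]
    rw [ContinuousLinearMap.one_def]
    exact ContinuousLinearMap.norm_id_le
  | succ k ih =>
    intro a
    rw [List.range'_succ, List.map_cons, List.prod_cons]
    calc ‖V a * ((List.range' (a + 1) k).map V).prod‖
        ≤ ‖V a‖ * ‖((List.range' (a + 1) k).map V).prod‖ := norm_mul_le _ _
      _ ≤ γ * γ ^ k := by
          apply mul_le_mul (hVbound a) (ih (a + 1)) (norm_nonneg _) hγ0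
      _ = γ ^ (k + 1) := (pow_succ' γ k).symm

lemma aux_tendsto_prod {Vinf : EuclideanSpace ℝ (Fin n) →L[ℝ] EuclideanSpace ℝ (Fin n)}
    (hV : Filter.Tendsto V atTop (nhds Vinf)) (k : ℕ) :
    Filter.Tendsto (fun T => ((List.range' (T - k) k).map V).prod) atTop (nhds (Vinf ^ k)) := by
  induction k with
  | zero => simpa using tendsto_const_nhds
  | succ k ih =>
    have h1 : Filter.Tendsto (fun T => V (T - (k + 1))) atTop (nhds Vinf) :=
      hV.comp (tendsto_sub_atTop_nat (k + 1))
    have h2 := h1.mul ih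
    rw [← pow_succ'] at h2
    apply h2.congr'
    filter_upwards [eventually_ge_atTop (k + 1)] with T hT
    rw [List.range'_succ, List.map_cons, List.prod_cons,
      show T - (k + 1) + 1 = T - k by omega]

end Aux

/-- Theorem 2(ii), analytic core: if `U_t → U_∞` with `‖U_t‖ ≤ M` and `V_t → V_∞` with
`‖V_t‖ ≤ γ < 1`, then `Σ_{t<T} U_t (V_{t+1}⋯V_{T−1}) → U_∞ (I − V_∞)⁻¹`. -/
theorem stmt_6 {n m : ℕ}
    (U : ℕ → (EuclideanSpace ℝ (Fin n) →L[ℝ] EuclideanSpace ℝ (Fin m)))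
    (Uinf : EuclideanSpace ℝ (Fin n) →L[ℝ] EuclideanSpace ℝ (Fin m))
    (V : ℕ → (EuclideanSpace ℝ (Fin n) →L[ℝ] EuclideanSpace ℝ (Fin n)))
    (Vinf : EuclideanSpace ℝ (Fin n) →L[ℝ] EuclideanSpace ℝ (Fin n))
    (M γ : ℝ) (hγ0 : 0 < γ) (hγ1 : γ < 1)
    (hUbound : ∀ t, ‖U t‖ ≤ M) (hUinf : ‖Uinf‖ ≤ M)
    (hVbound : ∀ t, ‖V t‖ ≤ γ) (hVinf : ‖Vinf‖ ≤ γ)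
    (hU : Tendsto U atTop (nhds Uinf)) (hV : Tendsto V atTop (nhds Vinf)) :
    Tendsto (fun T : ℕ => ∑ t ∈ range T, (U t).comp (prodIco V (t + 1) T))
      atTop (nhds (Uinf.comp (Ring.inverse (1 - Vinf)))) := by
  have hM : 0 ≤ M := le_trans (norm_nonneg _) (hUbound 0)
  have hVnorm : ‖Vinf‖ < 1 := lt_of_le_of_lt hVinf hγ1
  -- the family of terms, indexed by "distance from the top"
  set f : ℕ → ℕ → (EuclideanSpace ℝ (Fin n) →L[ℝ] EuclideanSpace ℝ (Fin m)) :=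
    fun T k => if k < T then (U (T - 1 - k)).comp (((List.range' (T - k) k).map V).prod) else 0
    with hf
  have hbound : ∀ T k, ‖f T k‖ ≤ M * γ ^ k := by
    intro T k
    simp only [hf]
    split
    · calc ‖(U (T - 1 - k)).comp (((List.range' (T - k) k).map V).prod)‖
          ≤ ‖U (T - 1 - k)‖ * ‖((List.range' (T - k) k).map V).prod‖ :=
            ContinuousLinearMap.opNorm_comp_le _ _
        _ ≤ M * γ ^ k :=
            mul_le_mul (hUbound _) (aux_norm_prod V hγ0.le hVbound k _) (norm_nonneg _)
              hM
    · simp [norm_zero]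
      positivity
  have hsumbound : Summable (fun k : ℕ => M * γ ^ k) :=
    (summable_geometric_of_lt_one hγ0.le hγ1).mul_left M
  -- pointwise limit
  have hptwise : ∀ k : ℕ, Tendsto (f · k) atTop (nhds (Uinf.comp (Vinf ^ k))) := by
    intro k
    have hU' : Tendsto (fun T => U (T - 1 - k)) atTop (nhds Uinf) :=
      hU.comp ((tendsto_sub_atTop_nat k).comp (tendsto_sub_atTop_nat 1))
    have hP := aux_tendsto_prod V hV k
    have hcomp : Continuous (fun p :
        ((EuclideanSpace ℝ (Fin n) →L[ℝ] EuclideanSpace ℝ (Fin m)) ×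
         (EuclideanSpace ℝ (Fin n) →L[ℝ] EuclideanSpace ℝ (Fin n))) => p.1.comp p.2) :=
      (isBoundedBilinearMap_comp (𝕜 := ℝ)).continuous
    have h2 : Tendsto (fun T => (U (T - 1 - k)).comp (((List.range' (T - k) k).map V).prod))
        atTop (nhds (Uinf.comp (Vinf ^ k))) :=
      (hcomp.tendsto (Uinf, Vinf ^ k)).comp (hU'.prodMk_nhds hP)
    apply h2.congr'
    filter_upwards [eventually_gt_atTop k] with T hT
    simp only [hf, if_pos hT]
  -- dominated convergence: tsum of f T · converges to the tsum of limits
  have hmain := tendsto_tsum_of_dominated_convergence hsumbound hptwise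
    (Eventually.of_forall (fun T => hbound T))
  -- identify the tsum with the finite sums
  have hfin : ∀ T : ℕ, (∑' k, f T k) = ∑ t ∈ range T, (U t).comp (prodIco V (t + 1) T) := by
    intro T
    rw [tsum_eq_sum (s := range T) (by
      intro k hk
      simp only [hf]
      rw [if_neg (by rw [Finset.mem_range] at hk; omega)])]
    rw [← Finset.sum_range_reflect (fun t => (U t).comp (prodIco V (t + 1) T)) T]
    apply Finset.sum_congr rfl
    intro k hk
    rw [Finset.mem_range] at hk
    simp only [hf, if_pos hk, prodIco]
    rw [show T - 1 - k + 1 = T - k by omega, show T - (T - k) = k by omega]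
  -- identify the limit
  have hlim : (∑' k, Uinf.comp (Vinf ^ k)) = Uinf.comp (Ring.inverse (1 - Vinf)) := by
    have hsumm : Summable (fun k : ℕ => Vinf ^ k) :=
      summable_geometric_of_norm_lt_one hVnorm
    have h1 : Ring.inverse (1 - Vinf) = ∑' k : ℕ, Vinf ^ k :=
      NormedRing.inverse_one_sub Vinf hVnorm
    have h2 := (ContinuousLinearMap.compL ℝ (EuclideanSpace ℝ (Fin n))
      (EuclideanSpace ℝ (Fin n)) (EuclideanSpace ℝ (Fin m)) Uinf).map_tsum hsumm
    rw [h1]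
    exact h2.symm
  rw [← hlim]
  exact hmain.congr hfin
end
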